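/- Let Θ ∈ ℝ^K and let Σ be a positive definite K×K real matrix. Fix i ∈ {1,…,K}, set σ_i = √(Σ_{ii}), b_{ij} = (Θ_j − Θ_i)/√(Σ_{ii} + Σ_{jj} − 2Σ_{ij}) for j ≠ i, and let R_i be the K×K matrix with unit diagonal, (R_i)_{ij} = (Σ_{ii} − Σ_{ij})/(σ_i·√(Σ_{ii} + Σ_{jj} − 2Σ_{ij})) for j ≠ i, and (R_i)_{jj'} = (Σ_{ii} − Σ_{ij'} − Σ_{ij} + Σ_{jj'})/(√(Σ_{ii} + Σ_{jj} − 2Σ_{ij})·√(Σ_{ii} + Σ_{j'j'} − 2Σ_{ij'})) for j, j' ≠ i. Then for every natural number r, ∫_{A_i} x_i^r · φ_K(x; Θ, Σ) dx = ∫_{{z ∈ ℝ^K : z_l < b_{il} for all l ≠ i}} (Θ_i + σ_i z_i)^r · φ_K(z; 0, R_i) dz. -/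

import Mathlib

open MeasureTheory ProbabilityTheory Real Matrix

/-- `regionA K i` is the set of points of `ℝ^K` where coordinate `i` is the strict minimum. -/
def regionA (K : ℕ) (i : Fin K) : Set (Fin K → ℝ) :=
  {x | ∀ j, j ≠ i → x i < x j}

/-- Multivariate normal density `φ_K(x; m, Σ)` on `ι → ℝ`. -/
noncomputable def mvNormalPDF {ι : Type*} [Fintype ι] [DecidableEq ι]
    (m : ι → ℝ) (S : Matrix ι ι ℝ) (x : ι → ℝ) : ℝ :=
  ((2 * π) ^ (Fintype.card ι) * S.det) ^ (-(1 : ℝ) / 2) *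
    Real.exp (-((x - m) ⬝ᵥ (S⁻¹ *ᵥ (x - m))) / 2)

/-- Multivariate normal measure `N(m, Σ)`, given by its density w.r.t. Lebesgue measure. -/
noncomputable def mvGaussian {ι : Type*} [Fintype ι] [DecidableEq ι]
    (m : ι → ℝ) (S : Matrix ι ι ℝ) : Measure (ι → ℝ) :=
  volume.withDensity fun x => ENNReal.ofReal (mvNormalPDF m S x)

/-- `√(Σ_ii + Σ_jj − 2Σ_ij)`, the standard deviation of `X_i − X_j`. -/
noncomputable def sdev {K : ℕ} (S : Matrix (Fin K) (Fin K) ℝ) (i j : Fin K) : ℝ :=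
  Real.sqrt (S i i + S j j - 2 * S i j)

/-- The correlation matrix `R_i` of the standardized vector `Z`. -/
noncomputable def Rmat {K : ℕ} (S : Matrix (Fin K) (Fin K) ℝ) (i : Fin K) :
    Matrix (Fin K) (Fin K) ℝ :=
  Matrix.of fun j j' =>
    if j = j' then 1
    else if j = i then (S i i - S i j') / (Real.sqrt (S i i) * sdev S i j')
    else if j' = i then (S i i - S i j) / (Real.sqrt (S i i) * sdev S i j)
    else (S i i - S i j' - S i j + S j j') / (sdev S i j * sdev S i j')

/-- The truncation bounds `b_ij = (Θ_j − Θ_i)/√(Σ_ii + Σ_jj − 2Σ_ij)`. -/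
noncomputable def bvec {K : ℕ} (Θ : Fin K → ℝ) (S : Matrix (Fin K) (Fin K) ℝ)
    (i j : Fin K) : ℝ :=
  (Θ j - Θ i) / sdev S i j

/-- `m_j(Z_i)`, the `j`-th marginal moment of the truncated standardized multivariate normal:
`∫_{z_l < b_il, l ≠ i} z_i^j φ_K(z; 0, R_i) dz`. -/
noncomputable def truncMoment {K : ℕ} (Θ : Fin K → ℝ) (S : Matrix (Fin K) (Fin K) ℝ)
    (i : Fin K) (j : ℕ) : ℝ :=
  ∫ z in {z : Fin K → ℝ | ∀ l, l ≠ i → z l < bvec Θ S i l},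
    (z i) ^ j * mvNormalPDF 0 (Rmat S i) z

/-!
Standardize by the affine map `z = A (x - Θ)` with `z_i = (x_i - Θ_i) / σ_i` and
`z_j = ((x_i - Θ_i) - (x_j - Θ_j)) / √(Σ_ii + Σ_jj - 2Σ_ij)` for `j ≠ i`. Then `x ∈ A_i` iff
`z_j < b_ij` for all `j ≠ i`, and `A Σ Aᵀ = R_i`. Under an invertible affine map the `N(Θ, Σ)`
density becomes `|det A|⁻¹` times the `N(0, A Σ Aᵀ)` density, so the change of variables formula
gives the identity, with `x_i = Θ_i + σ_i z_i`.
-/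

theorem Matrix.mul_mul_transpose_apply {ι R : Type*} [Fintype ι] [CommSemiring R]
    (A B : Matrix ι ι R) (j j' : ι) :
    (A * B * Aᵀ) j j' = A j ⬝ᵥ B *ᵥ A j' := by
  rw [Matrix.mul_apply', Matrix.dotProduct_mulVec]; rfl

section AffineChange

variable {ι : Type*} [Fintype ι] [DecidableEq ι]

theorem setIntegral_image_mulVec_sub {A : Matrix ι ι ℝ} (hA : A.det ≠ 0) (m : ι → ℝ)
    {s : Set (ι → ℝ)} (hs : MeasurableSet s) (g : (ι → ℝ) → ℝ) :
    ∫ z in (fun x => A *ᵥ (x - m)) '' s, g z = ∫ x in s, |A.det| * g (A *ᵥ (x - m)) := by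
  let L : (ι → ℝ) →L[ℝ] (ι → ℝ) := LinearMap.toContinuousLinearMap (Matrix.toLin' A)
  have hderiv : ∀ x ∈ s, HasFDerivWithinAt (fun x => A *ᵥ (x - m)) L s x := fun x _ => by
    simp_rw [Matrix.mulVec_sub]
    exact (L.hasFDerivAt.sub_const (A *ᵥ m)).hasFDerivWithinAt
  have hinj : Set.InjOn (fun x => A *ᵥ (x - m)) s := fun x _ y _ hxy =>
    sub_left_injective <| Matrix.mulVec_injective_iff_isUnit.2
      ((Matrix.isUnit_iff_isUnit_det A).2 (isUnit_iff_ne_zero.2 hA)) hxy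
  rw [MeasureTheory.integral_image_eq_integral_abs_det_fderiv_smul volume hs hderiv hinj]
  simp only [L, ContinuousLinearMap.det, LinearMap.coe_toContinuousLinearMap,
    LinearMap.det_toLin', smul_eq_mul]

theorem Matrix.mulVec_dotProduct_inv_mul_mul_transpose_mulVec {𝕜 : Type*} [Field 𝕜]
    (A S : Matrix ι ι 𝕜) (hA : A.det ≠ 0) (w : ι → 𝕜) :
    A *ᵥ w ⬝ᵥ (A * S * Aᵀ)⁻¹ *ᵥ A *ᵥ w = w ⬝ᵥ S⁻¹ *ᵥ w := by
  have hAu : IsUnit A.det := isUnit_iff_ne_zero.2 hA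
  have hAinv : (A * S * Aᵀ)⁻¹ = (Aᵀ)⁻¹ * S⁻¹ * A⁻¹ := by
    rw [Matrix.mul_inv_rev, Matrix.mul_inv_rev, Matrix.mul_assoc]
  rw [hAinv, Matrix.mulVec_mulVec, Matrix.mul_assoc, Matrix.mul_assoc,
    Matrix.nonsing_inv_mul _ hAu, Matrix.mul_one, ← Matrix.mulVec_mulVec,
    Matrix.dotProduct_mulVec, ← Matrix.mulVec_transpose, Matrix.mulVec_mulVec,
    ← Matrix.transpose_nonsing_inv, Matrix.transpose_transpose, Matrix.nonsing_inv_mul _ hAu,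
    Matrix.one_mulVec]

theorem abs_det_mul_mvNormalPDF_mulVec_sub {A S : Matrix ι ι ℝ} (hA : A.det ≠ 0)
    (hS : 0 ≤ S.det) (m x : ι → ℝ) :
    |A.det| * mvNormalPDF 0 (A * S * Aᵀ) (A *ᵥ (x - m)) = mvNormalPDF m S x := by
  have hnorm : ((2 * π) ^ Fintype.card ι * (A * S * Aᵀ).det) ^ (-(1 : ℝ) / 2)
      = |A.det|⁻¹ * ((2 * π) ^ Fintype.card ι * S.det) ^ (-(1 : ℝ) / 2) := by
    rw [Matrix.det_mul, Matrix.det_mul, Matrix.det_transpose,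
      show (2 * π) ^ Fintype.card ι * (A.det * S.det * A.det)
        = |A.det| ^ 2 * ((2 * π) ^ Fintype.card ι * S.det) by rw [sq_abs]; ring,
      Real.mul_rpow (by positivity) (by positivity), ← Real.rpow_natCast_mul (abs_nonneg _)]
    norm_num [Real.rpow_neg_one]
  rw [mvNormalPDF, mvNormalPDF, sub_zero,
    Matrix.mulVec_dotProduct_inv_mul_mul_transpose_mulVec A S hA, hnorm,
    ← mul_assoc, ← mul_assoc, mul_inv_cancel₀ (abs_ne_zero.2 hA), one_mul]

end AffineChange

theorem Matrix.PosDef.diag_add_diag_sub_two_mul_pos {ι : Type*} [Fintype ι] [DecidableEq ι]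
    {S : Matrix ι ι ℝ} (hS : S.PosDef) {i j : ι} (hij : j ≠ i) :
    0 < S i i + S j j - 2 * S i j := by
  have hv : (Pi.single i 1 - Pi.single j 1 : ι → ℝ) ≠ 0 := fun h => by
    simpa [hij.symm] using congrFun h i
  have hpos := hS.dotProduct_mulVec_pos hv
  have hsymm : S j i = S i j := by simpa using hS.isHermitian.apply i j
  simp only [star_trivial, Matrix.mulVec_sub, Matrix.mulVec_single, MulOpposite.op_one,
    one_smul, dotProduct_sub, sub_dotProduct, single_dotProduct, Matrix.col_apply, one_mul,
    sub_pos] at hpos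
  linarith

variable {K : ℕ} {S : Matrix (Fin K) (Fin K) ℝ}

theorem sdev_pos (hS : S.PosDef) {i j : Fin K} (hij : j ≠ i) : 0 < sdev S i j :=
  Real.sqrt_pos.2 (hS.diag_add_diag_sub_two_mul_pos hij)

noncomputable def standardizeMat (S : Matrix (Fin K) (Fin K) ℝ) (i : Fin K) :
    Matrix (Fin K) (Fin K) ℝ :=
  Matrix.of fun j => if j = i then (√(S i i))⁻¹ • Pi.single i 1
    else (sdev S i j)⁻¹ • (Pi.single i 1 - Pi.single j 1)

theorem standardizeMat_self (i : Fin K) :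
    standardizeMat S i i = (√(S i i))⁻¹ • Pi.single i 1 :=
  if_pos rfl

theorem standardizeMat_of_ne {i j : Fin K} (hij : j ≠ i) :
    standardizeMat S i j = (sdev S i j)⁻¹ • (Pi.single i 1 - Pi.single j 1) :=
  if_neg hij

theorem standardizeMat_mulVec_self (i : Fin K) (w : Fin K → ℝ) :
    (standardizeMat S i *ᵥ w) i = w i / √(S i i) := by
  change standardizeMat S i i ⬝ᵥ w = _
  rw [standardizeMat_self, smul_dotProduct, single_dotProduct, one_mul,
    smul_eq_mul, inv_mul_eq_div]

theorem standardizeMat_mulVec_of_ne {i j : Fin K} (hij : j ≠ i) (w : Fin K → ℝ) :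
    (standardizeMat S i *ᵥ w) j = (w i - w j) / sdev S i j := by
  change standardizeMat S i j ⬝ᵥ w = _
  rw [standardizeMat_of_ne hij, smul_dotProduct, sub_dotProduct,
    single_dotProduct, single_dotProduct, one_mul, one_mul, smul_eq_mul, inv_mul_eq_div]

theorem standardizeMat_mul_mul_transpose (hS : S.PosDef) (i : Fin K) :
    standardizeMat S i * S * (standardizeMat S i)ᵀ = Rmat S i := by
  have hsymm : ∀ j, S j i = S i j := fun j => by simpa using hS.isHermitian.apply i j
  have hσ : √(S i i) ^ 2 = S i i := Real.sq_sqrt hS.diag_pos.le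
  have hσ0 : √(S i i) ≠ 0 := (Real.sqrt_pos.2 hS.diag_pos).ne'
  have hsdev : ∀ {j}, j ≠ i → sdev S i j ^ 2 = S i i + S j j - 2 * S i j := fun hj =>
    Real.sq_sqrt (hS.diag_add_diag_sub_two_mul_pos hj).le
  have hsdev0 : ∀ {j}, j ≠ i → sdev S i j ≠ 0 := fun hj => (sdev_pos hS hj).ne'
  ext j j'
  rw [Matrix.mul_mul_transpose_apply]
  rcases eq_or_ne j i with rfl | hj <;> rcases eq_or_ne j' j with rfl | hj'
  · simp only [standardizeMat_self, Matrix.mulVec_smul, Matrix.mulVec_single,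
      MulOpposite.op_one, one_smul, dotProduct_smul, smul_dotProduct,
      single_dotProduct, Matrix.col_apply, one_mul, smul_eq_mul, Rmat,
      Matrix.of_apply, ↓reduceIte]
    field_simp
    exact hσ.symm
  · simp only [standardizeMat_self, standardizeMat_of_ne hj', hj'.symm, Matrix.mulVec_smul,
      Matrix.mulVec_sub, Matrix.mulVec_single, MulOpposite.op_one, one_smul, dotProduct_smul,
      smul_dotProduct, dotProduct_sub, single_dotProduct, Matrix.col_apply, one_mul, smul_eq_mul,
      Rmat, Matrix.of_apply, ↓reduceIte]
    have hs := hsdev0 hj'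
    field_simp
  · simp only [standardizeMat_of_ne hj, Matrix.mulVec_smul, Matrix.mulVec_sub,
      Matrix.mulVec_single, MulOpposite.op_one, one_smul, dotProduct_smul, smul_dotProduct,
      dotProduct_sub, sub_dotProduct, single_dotProduct, Matrix.col_apply, one_mul, smul_eq_mul,
      Rmat, Matrix.of_apply, ↓reduceIte]
    have hs := hsdev0 hj
    field_simp
    linarith [hsdev hj, hsymm j']
  · rcases eq_or_ne j' i with rfl | hj'i
    · simp only [standardizeMat_self, standardizeMat_of_ne hj, hj, Matrix.mulVec_smul,
        Matrix.mulVec_single, MulOpposite.op_one, one_smul, dotProduct_smul, smul_dotProduct,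
        sub_dotProduct, single_dotProduct, Matrix.col_apply, one_mul, smul_eq_mul, Rmat,
        Matrix.of_apply, ↓reduceIte]
      have hs := hsdev0 hj
      field_simp
      linarith [hsymm j]
    · simp only [standardizeMat_of_ne hj, standardizeMat_of_ne hj'i, hj, hj'i, hj'.symm,
        Matrix.mulVec_smul, Matrix.mulVec_sub, Matrix.mulVec_single,
        MulOpposite.op_one, one_smul, dotProduct_smul, smul_dotProduct, dotProduct_sub,
        sub_dotProduct, single_dotProduct, Matrix.col_apply, one_mul, smul_eq_mul, Rmat,
        Matrix.of_apply, ↓reduceIte]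
      have hs := hsdev0 hj
      have hs' := hsdev0 hj'i
      field_simp
      linarith [hsymm j]

theorem det_standardizeMat_ne_zero (hS : S.PosDef) (i : Fin K) :
    (standardizeMat S i).det ≠ 0 := by
  rw [Ne, ← Matrix.exists_mulVec_eq_zero_iff]
  rintro ⟨v, hv, hAv⟩
  have hvi : v i = 0 := by
    simpa [standardizeMat_mulVec_self, (Real.sqrt_pos.2 hS.diag_pos).ne'] using congrFun hAv i
  refine hv (funext fun l => ?_)
  rcases eq_or_ne l i with rfl | hl
  · exact hvi
  · have := congrFun hAv l
    rw [standardizeMat_mulVec_of_ne hl, Pi.zero_apply, div_eq_zero_iff, hvi, zero_sub,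
      neg_eq_zero] at this
    exact this.resolve_right (sdev_pos hS hl).ne'

theorem measurableSet_regionA (K : ℕ) (i : Fin K) : MeasurableSet (regionA K i) := by
  simp only [regionA, Set.ofPred_forall]
  exact .iInter fun j => .iInter fun _ =>
    measurableSet_lt (measurable_pi_apply i) (measurable_pi_apply j)

theorem image_regionA_standardize (Θ : Fin K → ℝ) (hS : S.PosDef) (i : Fin K) :
    (fun x => standardizeMat S i *ᵥ (x - Θ)) '' regionA K i
      = {z | ∀ l, l ≠ i → z l < bvec Θ S i l} := by
  have hsurj : Function.Surjective fun x => standardizeMat S i *ᵥ (x - Θ) := fun z =>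
    ⟨Θ + (standardizeMat S i)⁻¹ *ᵥ z, by
      simp [Matrix.mulVec_mulVec, Matrix.mul_nonsing_inv _
        (isUnit_iff_ne_zero.2 (det_standardizeMat_ne_zero hS i))]⟩
  rw [← Set.image_preimage_eq {z | ∀ l, l ≠ i → z l < bvec Θ S i l} hsurj]
  congr 1
  ext x
  refine forall₂_congr fun l hl => ?_
  dsimp only
  rw [standardizeMat_mulVec_of_ne hl, bvec, div_lt_div_iff_of_pos_right (sdev_pos hS hl),
    Pi.sub_apply, Pi.sub_apply]
  constructor <;> intro h <;> linarith

/-- Change of variables: the integral of `x_i^r φ_K(x;Θ,Σ)` over the region `A_i` equals the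
integral of `(Θ_i + σ_i z_i)^r φ_K(z;0,R_i)` over `{z : z_l < b_il for all l ≠ i}`. -/
theorem setIntegral_regionA_eq_truncated
    {K : ℕ} (Θ : Fin K → ℝ) (S : Matrix (Fin K) (Fin K) ℝ) (hS : S.PosDef)
    (i : Fin K) (r : ℕ) :
    ∫ x in regionA K i, (x i) ^ r * mvNormalPDF Θ S x
      = ∫ z in {z : Fin K → ℝ | ∀ l, l ≠ i → z l < bvec Θ S i l},
          (Θ i + Real.sqrt (S i i) * z i) ^ r * mvNormalPDF 0 (Rmat S i) z := by
  have hA := det_standardizeMat_ne_zero hS i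
  rw [← image_regionA_standardize Θ hS i,
    setIntegral_image_mulVec_sub hA Θ (measurableSet_regionA K i)]
  refine setIntegral_congr_fun (measurableSet_regionA K i) fun x _ => ?_
  rw [← standardizeMat_mul_mul_transpose hS i, mul_left_comm,
    abs_det_mul_mvNormalPDF_mulVec_sub hA hS.det_pos.le, standardizeMat_mulVec_self,
    mul_div_cancel₀ _ (Real.sqrt_pos.2 hS.diag_pos).ne', Pi.sub_apply, add_sub_cancel]
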